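/- Let (P_μ)_{μ∈𝒫(E)} be a nonlinear Markov transition kernel family on a measurable space (E,ℰ) satisfying the global nonlinear Dobrushin condition with constant α ∈ (0,1] and the measure-Lipschitz condition with constant λ = α. Then for all μ, ν ∈ 𝒫(E) and all positive integers n, the n-th marginal laws satisfy d_TV(μ_n, ν_n) ≤ 2/(λ n), where μ_0 = μ, ν_0 = ν, μ_{k+1} = P_{μ_k} μ_k and ν_{k+1} = P_{ν_k} ν_k. -/

import Mathlib

/-!
Split `μ = m + σ`, `ν = m + τ` along a Hahn set, so that `σ(E) = τ(E) = d / 2` with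
`d = d_TV(μ, ν)`. On a set `A`, the Dobrushin condition bounds the contribution of `σ` against `τ`
by `(1 - α) d / 2`, and the measure-Lipschitz condition bounds that of the common part `m`, of mass
`1 - d / 2`, by `(λ d / 2) (1 - d / 2)`. So one step of the chain maps `d` to at most
`(1 - α) d + λ d (1 - d / 2) = d - λ d² / 2` (as `λ = α`), and this recursion, started from
`d_1 ≤ 2`, forces `d_n ≤ 2 / (λ n)`.
-/

open MeasureTheory ProbabilityTheory

/-- Total variation distance: `d_TV(μ,ν) = 2 ⨆_{A measurable} |μ(A) − ν(A)|`. -/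
noncomputable def dTV {E : Type*} [MeasurableSpace E] (μ ν : Measure E) : ℝ :=
  2 * ⨆ A : {A : Set E // MeasurableSet A}, |(μ A.1).toReal - (ν A.1).toReal|

open Set
open scoped ENNReal

section

variable {E F : Type*} [MeasurableSpace E] [MeasurableSpace F]

section TotalVariation

lemma dTV_comm (μ ν : Measure E) : dTV μ ν = dTV ν μ := by
  simp only [dTV, abs_sub_comm]

lemma dTV_le_of_forall_abs_sub_le {μ ν : Measure E} {K : ℝ}
    (h : ∀ A, MeasurableSet A → |(μ A).toReal - (ν A).toReal| ≤ K) :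
    dTV μ ν ≤ 2 * K := by
  unfold dTV
  gcongr
  exact ciSup_le fun A => h A.1 A.2

lemma dTV_le_two (μ ν : Measure E) [IsProbabilityMeasure μ] [IsProbabilityMeasure ν] :
    dTV μ ν ≤ 2 := by
  simpa using dTV_le_of_forall_abs_sub_le (μ := μ) (ν := ν) (K := 1) fun _ _ =>
    abs_sub_le_of_nonneg_of_le ENNReal.toReal_nonneg measureReal_le_one
      ENNReal.toReal_nonneg measureReal_le_one

variable (μ ν : Measure E) [IsFiniteMeasure μ] [IsFiniteMeasure ν]

lemma abs_sub_le_dTV {A : Set E} (hA : MeasurableSet A) :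
    |(μ A).toReal - (ν A).toReal| ≤ dTV μ ν / 2 := by
  have hbdd : BddAbove (range fun A : {A : Set E // MeasurableSet A} =>
      |(μ A.1).toReal - (ν A.1).toReal|) := by
    refine ⟨(μ univ).toReal + (ν univ).toReal, ?_⟩
    rintro _ ⟨B, rfl⟩
    refine (abs_sub _ _).trans ?_
    rw [abs_of_nonneg ENNReal.toReal_nonneg, abs_of_nonneg ENNReal.toReal_nonneg]
    gcongr <;> simp
  have := le_ciSup hbdd ⟨A, hA⟩
  rw [dTV]
  linarith

lemma dTV_nonneg : 0 ≤ dTV μ ν := by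
  linarith [abs_sub_le_dTV μ ν MeasurableSet.empty, abs_nonneg ((μ ∅).toReal - (ν ∅).toReal)]

lemma measure_le_add_ofReal_of_dTV_le {A : Set E} (hA : MeasurableSet A) {c : ℝ}
    (h : dTV μ ν ≤ c) : μ A ≤ ν A + ENNReal.ofReal (c / 2) := by
  have hreal : (μ A).toReal ≤ (ν A).toReal + c / 2 := by
    linarith [abs_sub_le_dTV μ ν hA, le_abs_self ((μ A).toReal - (ν A).toReal)]
  calc μ A = ENNReal.ofReal (μ A).toReal := (ENNReal.ofReal_toReal (measure_ne_top _ _)).symm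
    _ ≤ ENNReal.ofReal ((ν A).toReal + c / 2) := ENNReal.ofReal_le_ofReal hreal
    _ ≤ ENNReal.ofReal (ν A).toReal + ENNReal.ofReal (c / 2) := ENNReal.ofReal_add_le
    _ = ν A + ENNReal.ofReal (c / 2) := by rw [ENNReal.ofReal_toReal (measure_ne_top _ _)]

lemma dTV_le_of_forall_le_add {c : ℝ} (hc : 0 ≤ c)
    (h₁ : ∀ A, MeasurableSet A → μ A ≤ ν A + ENNReal.ofReal c)
    (h₂ : ∀ A, MeasurableSet A → ν A ≤ μ A + ENNReal.ofReal c) :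
    dTV μ ν ≤ 2 * c := by
  have toReal_le {p q : Measure E} [IsFiniteMeasure p] [IsFiniteMeasure q] {A : Set E}
      (h : p A ≤ q A + ENNReal.ofReal c) : (p A).toReal ≤ (q A).toReal + c := by
    simpa [ENNReal.toReal_add (measure_ne_top _ _) ENNReal.ofReal_ne_top, hc] using
      ENNReal.toReal_mono (by finiteness) h
  refine dTV_le_of_forall_abs_sub_le fun A hA => abs_sub_le_iff.mpr ⟨?_, ?_⟩
  · linarith [toReal_le (h₁ A hA)]
  · linarith [toReal_le (h₂ A hA)]

end TotalVariation

lemma dTV_add_add_le (m σ τ : Measure E) [IsFiniteMeasure m] [IsFiniteMeasure σ]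
    [IsFiniteMeasure τ] (hστ : σ univ = τ univ) :
    dTV (m + σ) (m + τ) ≤ 2 * (σ univ).toReal := by
  refine dTV_le_of_forall_abs_sub_le fun A _ => ?_
  simp only [Measure.coe_add, Pi.add_apply,
    ENNReal.toReal_add (measure_ne_top _ _) (measure_ne_top _ _), add_sub_add_left_eq_sub]
  refine abs_sub_le_of_nonneg_of_le ENNReal.toReal_nonneg ?_ ENNReal.toReal_nonneg ?_
  · exact ENNReal.toReal_mono (measure_ne_top _ _) (measure_mono (subset_univ A))
  · rw [hστ]
    exact ENNReal.toReal_mono (measure_ne_top _ _) (measure_mono (subset_univ A))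

lemma exists_eq_add_eq_add_measure_univ (μ ν : Measure E) [IsProbabilityMeasure μ]
    [IsProbabilityMeasure ν] :
    ∃ m σ τ : Measure E, μ = m + σ ∧ ν = m + τ ∧
      σ univ = ENNReal.ofReal (dTV μ ν / 2) ∧ τ univ = ENNReal.ofReal (dTV μ ν / 2) := by
  obtain ⟨S, hS, hνμ, hμν⟩ := hahn_decomposition μ ν
  have hle : ν.restrict S ≤ μ.restrict S := Measure.le_iff.mpr fun t ht => by
    simpa only [Measure.restrict_apply ht] using hνμ _ (ht.inter hS) inter_subset_right
  have hle' : μ.restrict Sᶜ ≤ ν.restrict Sᶜ := Measure.le_iff.mpr fun t ht => by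
    simpa only [Measure.restrict_apply ht] using hμν _ (ht.inter hS.compl) inter_subset_right
  set m := ν.restrict S + μ.restrict Sᶜ
  set σ := μ.restrict S - ν.restrict S
  set τ := ν.restrict Sᶜ - μ.restrict Sᶜ
  have hμ : μ = m + σ := by
    conv_lhs => rw [← Measure.restrict_add_restrict_compl (μ := μ) hS,
      ← Measure.sub_add_cancel_of_le hle]
    simp only [m, σ]
    ac_rfl
  have hν : ν = m + τ := by
    conv_lhs => rw [← Measure.restrict_add_restrict_compl (μ := ν) hS,
      ← Measure.sub_add_cancel_of_le hle']
    simp only [m, τ]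
    ac_rfl
  have hστ : σ univ = τ univ := by
    refine (ENNReal.add_right_inj (measure_ne_top m univ)).mp ?_
    rw [← Measure.add_apply, ← Measure.add_apply, ← hμ, ← hν, measure_univ, measure_univ]
  have hσS : (σ univ).toReal ≤ dTV μ ν / 2 := by
    rw [Measure.sub_apply MeasurableSet.univ hle, Measure.restrict_apply_univ,
      Measure.restrict_apply_univ, ENNReal.toReal_sub_of_le (hνμ S hS subset_rfl)
        (measure_ne_top _ _)]
    exact (le_abs_self _).trans (abs_sub_le_dTV μ ν hS)
  have hdσ : dTV μ ν ≤ 2 * (σ univ).toReal := by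
    rw [hμ, hν]
    exact dTV_add_add_le m σ τ hστ
  have hσ : σ univ = ENNReal.ofReal (dTV μ ν / 2) := by
    rw [← ENNReal.ofReal_toReal (measure_ne_top σ univ)]
    congr 1
    linarith
  exact ⟨m, σ, τ, hμ, hν, hσ, hστ ▸ hσ⟩

section Kernel

lemma lintegral_le_lintegral_add_of_forall_le_add {σ : Measure E} {τ : Measure F}
    (hστ : σ univ = τ univ) {f : E → ℝ≥0∞} {g : F → ℝ≥0∞} {c : ℝ≥0∞}
    (h : ∀ x y, f x ≤ g y + c) :
    ∫⁻ x, f x ∂σ ≤ ∫⁻ y, g y ∂τ + c * σ univ :=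
  calc ∫⁻ x, f x ∂σ ≤ ∫⁻ _, (⨅ y, g y) + c ∂σ :=
        lintegral_mono fun x => by rw [ENNReal.iInf_add]; exact le_iInf (h x)
    _ = ∫⁻ _, ⨅ y, g y ∂τ + c * σ univ := by rw [lintegral_const, lintegral_const, add_mul, hστ]
    _ ≤ ∫⁻ y, g y ∂τ + c * σ univ := by gcongr with y; exact iInf_le g y

lemma bind_add_apply_le (κ η : Kernel E F) (m : Measure E) {σ τ : Measure E}
    (hστ : σ univ = τ univ) {A : Set F} (hA : MeasurableSet A) {c₁ c₂ : ℝ≥0∞}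
    (h₁ : ∀ x y, κ x A ≤ η y A + c₁) (h₂ : ∀ x, κ x A ≤ η x A + c₂) :
    (m + σ).bind κ A ≤ (m + τ).bind η A + (c₁ * σ univ + c₂ * m univ) := by
  rw [Measure.bind_apply hA κ.aemeasurable, Measure.bind_apply hA η.aemeasurable,
    lintegral_add_measure, lintegral_add_measure]
  have hm : ∫⁻ x, κ x A ∂m ≤ ∫⁻ x, η x A ∂m + c₂ * m univ := by
    calc ∫⁻ x, κ x A ∂m ≤ ∫⁻ x, η x A + c₂ ∂m := lintegral_mono h₂
      _ = ∫⁻ x, η x A ∂m + c₂ * m univ := by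
        rw [lintegral_add_right _ measurable_const, lintegral_const]
  have hσ := lintegral_le_lintegral_add_of_forall_le_add hστ h₁
  calc _ ≤ (∫⁻ x, η x A ∂m + c₂ * m univ) + (∫⁻ y, η y A ∂τ + c₁ * σ univ) := add_le_add hm hσ
    _ = _ := by ring

variable (κ η : Kernel E F) [IsMarkovKernel κ] [IsMarkovKernel η]
  (μ ν : Measure E) [IsProbabilityMeasure μ] [IsProbabilityMeasure ν]
  {a b : ℝ} (ha : 0 ≤ a) (hb : 0 ≤ b)
  (h₁ : ∀ x y, dTV (κ x) (η y) ≤ a) (h₂ : ∀ x, dTV (κ x) (η x) ≤ b)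
include ha hb h₁ h₂

lemma bind_apply_le_of_dTV_le {A : Set F} (hA : MeasurableSet A) :
    μ.bind κ A ≤ ν.bind η A + ENNReal.ofReal ((a * dTV μ ν + b * (2 - dTV μ ν)) / 4) := by
  have hd₀ := dTV_nonneg μ ν
  have hd₂ := dTV_le_two μ ν
  obtain ⟨m, σ, τ, hμ, hν, hσ, hτ⟩ := exists_eq_add_eq_add_measure_univ μ ν
  set d := dTV μ ν
  have hm : m univ = ENNReal.ofReal (1 - d / 2) := by
    have hmσ : m univ + σ univ = 1 := by rw [← Measure.add_apply, ← hμ, measure_univ]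
    rw [ENNReal.ofReal_sub _ (by positivity), ENNReal.ofReal_one, ← hσ]
    exact ENNReal.eq_sub_of_add_eq (by simp [hσ]) hmσ
  rw [hμ, hν]
  refine (bind_add_apply_le κ η m (hσ.trans hτ.symm) hA
    (fun x y => measure_le_add_ofReal_of_dTV_le _ _ hA (h₁ x y))
    (fun x => measure_le_add_ofReal_of_dTV_le _ _ hA (h₂ x))).trans_eq ?_
  rw [hσ, hm, ← ENNReal.ofReal_mul (by positivity), ← ENNReal.ofReal_mul (by positivity),
    ← ENNReal.ofReal_add (by positivity) (mul_nonneg (by positivity) (by linarith))]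
  congr 2
  ring

theorem dTV_bind_le :
    dTV (μ.bind κ) (ν.bind η) ≤ (a * dTV μ ν + b * (2 - dTV μ ν)) / 2 := by
  have hd₀ := dTV_nonneg μ ν
  have hd₂ := dTV_le_two μ ν
  have h₁' : ∀ x y, dTV (η x) (κ y) ≤ a := fun x y => dTV_comm (η x) (κ y) ▸ h₁ y x
  have h₂' : ∀ x, dTV (η x) (κ x) ≤ b := fun x => dTV_comm (η x) (κ x) ▸ h₂ x
  have := dTV_le_of_forall_le_add (μ.bind κ) (ν.bind η)
    (div_nonneg (add_nonneg (mul_nonneg ha hd₀) (mul_nonneg hb (by linarith))) zero_le_four)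
    (fun A hA => bind_apply_le_of_dTV_le κ η μ ν ha hb h₁ h₂ hA)
    (fun A hA => by
      simpa only [dTV_comm ν μ] using bind_apply_le_of_dTV_le η κ ν μ ha hb h₁' h₂' hA)
  linarith

end Kernel

lemma sub_mul_sq_div_two_le {c x k : ℝ} (hc : 0 < c) (hk : 1 ≤ k) (hx : x ≤ 2 / (c * k)) :
    x - c * x ^ 2 / 2 ≤ 2 / (c * (k + 1)) := by
  rw [le_div_iff₀ (by positivity)] at hx ⊢
  have hcx : c * x ≤ 2 := by
    rcases le_or_gt x 0 with h | h <;> nlinarith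
  -- with `y = c x`, `t = k y`: `4 - (k + 1) (2 y - y²) = (2 - t) (2 - y) + y²`, and `t, y ≤ 2`
  nlinarith [mul_nonneg (sub_nonneg.mpr hx) (sub_nonneg.mpr hcx), sq_nonneg (c * x)]

lemma le_two_div_of_le_sub_mul_sq {c : ℝ} (hc : 0 < c) {x : ℕ → ℝ}
    (hx₁ : x 1 ≤ 2 / c) (hx : ∀ k, x (k + 1) ≤ x k - c * x k ^ 2 / 2) :
    ∀ n, 0 < n → x n ≤ 2 / (c * n) := by
  intro n hn
  induction n, hn using Nat.le_induction with
  | base => simpa using hx₁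
  | succ k hk ih =>
    push_cast
    exact (hx k).trans (sub_mul_sq_div_two_le hc (by exact_mod_cast hk) ih)

end

/-- Under the global nonlinear Dobrushin condition with constant `α ∈ (0,1]` and the
measure-Lipschitz condition with constant `lam = α`, the marginal laws started from any
two initial distributions satisfy `d_TV(μ_n, ν_n) ≤ 2/(lam n)` for positive `n`. -/
theorem stmt7 {E : Type*} [MeasurableSpace E]
    (P : Measure E → Kernel E E) (hMarkov : ∀ μ, IsMarkovKernel (P μ))
    (α lam : ℝ) (hα0 : 0 < α) (hα1 : α ≤ 1) (hlamα : lam = α)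
    (hDobr : ∀ μ ν : Measure E, IsProbabilityMeasure μ → IsProbabilityMeasure ν →
      ∀ x y : E, dTV ((P μ) x) ((P ν) y) ≤ 2 * (1 - α))
    (hLip : ∀ μ ν : Measure E, IsProbabilityMeasure μ → IsProbabilityMeasure ν →
      ∀ x : E, dTV ((P μ) x) ((P ν) x) ≤ lam * dTV μ ν)
    (μ ν : Measure E) (hμ : IsProbabilityMeasure μ) (hν : IsProbabilityMeasure ν)
    (μseq νseq : ℕ → Measure E) (hμ0 : μseq 0 = μ) (hν0 : νseq 0 = ν)
    (hμS : ∀ k : ℕ, μseq (k + 1) = (μseq k).bind ⇑(P (μseq k)))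
    (hνS : ∀ k : ℕ, νseq (k + 1) = (νseq k).bind ⇑(P (νseq k))) :
    ∀ n : ℕ, 0 < n → dTV (μseq n) (νseq n) ≤ 2 / (lam * n) := by
  subst hlamα
  have hprob : ∀ n, IsProbabilityMeasure (μseq n) ∧ IsProbabilityMeasure (νseq n) := by
    intro n
    induction n with
    | zero => exact hμ0 ▸ hν0 ▸ ⟨hμ, hν⟩
    | succ k ih =>
      have := ih.1; have := ih.2; have := hMarkov (μseq k); have := hMarkov (νseq k)
      rw [hμS, hνS]
      exact ⟨inferInstance, inferInstance⟩
  have hstep (k : ℕ) : dTV (μseq (k + 1)) (νseq (k + 1))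
      ≤ dTV (μseq k) (νseq k) - lam * dTV (μseq k) (νseq k) ^ 2 / 2 := by
    have := (hprob k).1; have := (hprob k).2; have := hMarkov (μseq k); have := hMarkov (νseq k)
    rw [hμS, hνS]
    refine (dTV_bind_le _ _ _ _ (by linarith) (mul_nonneg hα0.le (dTV_nonneg _ _))
      (hDobr _ _ inferInstance inferInstance) (hLip _ _ inferInstance inferInstance)).trans_eq ?_
    ring
  have hfirst : dTV (μseq 1) (νseq 1) ≤ 2 / lam := by
    have := (hprob 1).1; have := (hprob 1).2
    exact (dTV_le_two _ _).trans ((le_div_iff₀ hα0).mpr (by linarith))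
  exact le_two_div_of_le_sub_mul_sq hα0 hfirst hstep
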